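/- arXiv:1706.07431 — 7 statements merged into one kernel-verified Lean document; each statement's English description precedes it below -/
import Mathlib

section
/- The inverse of the (n-1)×(n-1) lower triangular Toeplitz matrix Q with entries Q[i,j] = c_{i-j+1} for i ≥ j (and 0 otherwise), where c_1 = 1, is again a lower triangular Toeplitz matrix whose (i,j)-entry for i ≥ j equals (-1)^{i+j} m_{i-j}, where m_r denotes the r-th leading principal minor of the Toeplitz matrix M_0 with entries M_0[i,j] = c_{i-j+2} (with m_0 = 1). -/
/-! Expanding `det (M0 c (s + 1))` along its first column gives the recurrence
`m_{s+1} = ∑_{p+q=s} (-1)^p c_{p+2} m_q`, because each minor is block lower triangular with a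
unitriangular block. Rewritten as `∑_{p+q=s} c_{p+1} (-1)^q m_q = δ_{s,0}`, it says that `Q`
times the proposed lower triangular Toeplitz matrix is the identity. -/

open Matrix Finset

/-- The n×n Toeplitz matrix with (i,j)-entry `c (i - j + 2)` (1-based), i.e. first row
`c 2, c 1, 0, ...`. Here 0-based: entry is `c (i + 2 - j)` when `j ≤ i + 1`, else 0. -/
noncomputable def M0 (c : ℕ → ℂ) (n : ℕ) : Matrix (Fin n) (Fin n) ℂ :=
  fun i j => if (j : ℕ) ≤ (i : ℕ) + 1 then c ((i : ℕ) + 2 - (j : ℕ)) else 0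

/-- `pm c r` is the r-th leading principal minor of `M0 c n` (independent of `n ≥ r`);
`pm c 0 = 1`. -/
noncomputable def pm (c : ℕ → ℂ) (r : ℕ) : ℂ := (M0 c r).det

/-- The s×s lower triangular Toeplitz matrix with first column `c 1, c 2, ..., c s`. -/
noncomputable def Qmat (c : ℕ → ℂ) (s : ℕ) : Matrix (Fin s) (Fin s) ℂ :=
  fun i j => if (j : ℕ) ≤ (i : ℕ) then c ((i : ℕ) + 1 - (j : ℕ)) else 0

lemma Fin.val_succAbove {s : ℕ} (i : Fin (s + 1)) (a : Fin s) :
    (i.succAbove a : ℕ) = if (a : ℕ) < i then (a : ℕ) else (a : ℕ) + 1 := by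
  split_ifs with h
  · rw [Fin.succAbove_of_castSucc_lt _ _ h, Fin.val_castSucc]
  · rw [Fin.succAbove_of_le_castSucc _ _ (not_lt.mp h), Fin.val_succ]

/-- Entries of a product of two lower triangular Toeplitz matrices: the product is again
lower triangular Toeplitz, with the convolution of the two symbols as symbol. -/
lemma sum_ite_mul_ite_eq_sum_antidiagonal {R : Type*} [NonUnitalNonAssocSemiring R] {s : ℕ}
    (a b : ℕ → R) (i j : Fin s) :
    ∑ k : Fin s, (if (k : ℕ) ≤ i then a (i - k) else 0) * (if (j : ℕ) ≤ k then b (k - j) else 0)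
      = if (j : ℕ) ≤ i then ∑ x ∈ antidiagonal ((i : ℕ) - j), a x.1 * b x.2 else 0 := by
  rw [Fin.sum_univ_eq_sum_range
    (fun k => (if k ≤ i then a (i - k) else 0) * (if (j : ℕ) ≤ k then b (k - j) else 0))]
  simp_rw [ite_zero_mul_ite_zero, ← sum_filter]
  have hfilter : {k ∈ range s | k ≤ (i : ℕ) ∧ (j : ℕ) ≤ k} = Icc (j : ℕ) i := by
    ext k
    simp only [mem_filter, mem_range, mem_Icc]
    omega
  rw [hfilter]
  split_ifs with hji
  · refine sum_nbij' (fun k => (i - k, k - j)) (fun x => j + x.2) ?_ ?_ ?_ ?_ fun _ _ => rfl <;>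
      intro x hx <;>
      simp only [mem_Icc, HasAntidiagonal.mem_antidiagonal, Prod.ext_iff] at hx ⊢ <;>
      omega
  · rw [Icc_eq_empty (by omega), sum_empty]

lemma det_Qmat (c : ℕ → ℂ) (hc1 : c 1 = 1) (s : ℕ) : (Qmat c s).det = 1 := by
  have hlower : (Qmat c s).BlockTriangular OrderDual.toDual := fun i j hij =>
    if_neg (not_le.mpr (show (i : ℕ) < j from hij))
  rw [det_of_isLowerTriangular _ hlower]
  refine prod_eq_one fun i _ => ?_
  simp [Qmat, hc1]

/-- Removing row `i` and the first column of `M0 c (s + 1)` leaves a block lower triangular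
matrix with diagonal blocks `Qmat c i` and `M0 c (s - i)`. -/
lemma det_M0_submatrix_succAbove_succ (c : ℕ → ℂ) (hc1 : c 1 = 1) (s : ℕ) (i : Fin (s + 1)) :
    ((M0 c (s + 1)).submatrix i.succAbove Fin.succ).det = pm c (s - i) := by
  set k : ℕ := (i : ℕ)
  let e : Fin k ⊕ Fin (s - k) ≃ Fin s := finSumFinEquiv.trans (finCongr (by omega))
  have hrow_inl (x : Fin k) : (i.succAbove (e (Sum.inl x)) : ℕ) = x := by
    simp [e, Fin.val_succAbove, k]
  have hrow_inr (x : Fin (s - k)) : (i.succAbove (e (Sum.inr x)) : ℕ) = k + x + 1 := by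
    simp [e, Fin.val_succAbove, k]
  have hcol_inl (y : Fin k) : ((e (Sum.inl y)).succ : ℕ) = y + 1 := by simp [e]
  have hcol_inr (y : Fin (s - k)) : ((e (Sum.inr y)).succ : ℕ) = k + y + 1 := by simp [e]
  have hblock : ((M0 c (s + 1)).submatrix i.succAbove Fin.succ).submatrix e e
      = fromBlocks (Qmat c k) 0
          (of fun x y => M0 c (s + 1) (i.succAbove (e (Sum.inr x))) (e (Sum.inl y)).succ)
          (M0 c (s - k)) := by
    ext (x | x) (y | y) <;>
      simp only [submatrix_apply, fromBlocks_apply₁₁, fromBlocks_apply₁₂, fromBlocks_apply₂₁,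
        fromBlocks_apply₂₂, of_apply, Matrix.zero_apply, M0, Qmat, hrow_inl, hrow_inr, hcol_inl,
        hcol_inr] <;>
      split_ifs <;> first | rfl | omega | (congr 1; omega)
  rw [← det_submatrix_equiv_self e, hblock, det_fromBlocks_zero₁₂, det_Qmat c hc1, one_mul, pm]

lemma pm_succ (c : ℕ → ℂ) (hc1 : c 1 = 1) (s : ℕ) :
    pm c (s + 1) = ∑ x ∈ antidiagonal s, (-1) ^ x.1 * c (x.1 + 2) * pm c x.2 := by
  rw [pm, det_succ_column_zero, Nat.sum_antidiagonal_eq_sum_range_succ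
    (fun p q => (-1) ^ p * c (p + 2) * pm c q),
    ← Fin.sum_univ_eq_sum_range (fun p => (-1) ^ p * c (p + 2) * pm c (s - p))]
  refine sum_congr rfl fun i _ => ?_
  rw [det_M0_submatrix_succAbove_succ c hc1]
  simp [M0]

lemma sum_antidiagonal_mul_pm (c : ℕ → ℂ) (hc1 : c 1 = 1) (s : ℕ) :
    ∑ x ∈ antidiagonal s, c (x.1 + 1) * ((-1) ^ x.2 * pm c x.2) = if s = 0 then 1 else 0 := by
  cases s with
  | zero => simp [pm, hc1]
  | succ s =>
    rw [Nat.sum_antidiagonal_succ, pm_succ c hc1, mul_sum, mul_sum, ← sum_add_distrib]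
    refine sum_eq_zero fun x hx => ?_
    obtain rfl : s = x.1 + x.2 := (HasAntidiagonal.mem_antidiagonal.mp hx).symm
    have hsign : (-1 : ℂ) ^ (x.1 + x.2 + 1) * (-1) ^ x.1 = -(-1) ^ x.2 := by
      rw [← pow_add, show x.1 + x.2 + 1 + x.1 = 2 * x.1 + x.2 + 1 by ring, pow_succ, pow_add,
        pow_mul]
      simp
    simp only [zero_add, hc1, one_mul]
    linear_combination (c (x.1 + 2) * pm c x.2) * hsign

theorem stmt0_general (n : ℕ) (c : ℕ → ℂ) (hc1 : c 1 = 1) :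
    (Qmat c (n - 1))⁻¹ = fun (i j : Fin (n - 1)) =>
      if (j : ℕ) ≤ (i : ℕ)
      then (-1 : ℂ) ^ ((i : ℕ) + (j : ℕ)) * pm c ((i : ℕ) - (j : ℕ))
      else 0 := by
  apply inv_eq_right_inv
  ext i j
  have hQ (k : Fin (n - 1)) :
      Qmat c (n - 1) i k = if (k : ℕ) ≤ i then c ((i - k : ℕ) + 1) else 0 := by
    simp only [Qmat]
    split_ifs <;> first | rfl | (congr 1; omega)
  have hsign (k : Fin (n - 1)) :
      (if (j : ℕ) ≤ k then (-1 : ℂ) ^ ((k : ℕ) + j) * pm c (k - j) else 0)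
        = if (j : ℕ) ≤ k then (-1) ^ (k - j : ℕ) * pm c (k - j) else 0 := by
    split_ifs with hjk
    · rw [show (k : ℕ) + j = (k - j) + 2 * j by omega, pow_add, pow_mul]
      simp
    · rfl
  erw [mul_apply]
  rw [one_apply]
  simp only [hQ, hsign]
  rw [sum_ite_mul_ite_eq_sum_antidiagonal (fun p => c (p + 1)) (fun q => (-1) ^ q * pm c q),
    sum_antidiagonal_mul_pm c hc1]
  simp only [Fin.ext_iff]
  split_ifs <;> first | rfl | omega

/-- Property 1: `Q⁻¹` is lower triangular Toeplitz with (i,j)-entry `(-1)^(i+j) m_(i-j)`. -/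
theorem stmt0 (n : ℕ) (hn : 2 ≤ n) (c : ℕ → ℂ) (hc1 : c 1 = 1) :
    (Qmat c (n - 1))⁻¹ = fun (i j : Fin (n - 1)) =>
      if (j : ℕ) ≤ (i : ℕ)
      then (-1 : ℂ) ^ ((i : ℕ) + (j : ℕ)) * pm c ((i : ℕ) - (j : ℕ))
      else 0 :=
  stmt0_general n c hc1
end

section
/- Let c_2, ..., c_{n+1} be nonzero complex numbers with c_1 = 1, and let m_r be the r-th leading principal minor of the n×n Toeplitz matrix M_0 with (i,j)-entry c_{i-j+2}. Then m_2 = m_3 = ... = m_n = 0 if and only if c_k = c_2^{k-1} for 2 ≤ k ≤ n+1, i.e. if and only if the first two columns of M_0 are linearly dependent. -/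
open Matrix

lemma key (c : ℕ → ℂ) (hc1 : c 1 = 1) (s : ℕ) (hs : 1 ≤ s)
    (h : ∀ j, 2 ≤ j → j ≤ s + 1 → c j = c 2 ^ (j - 1)) :
    pm c (s + 1) = (-1) ^ s * (c (s + 2) - c 2 ^ (s + 1)) := by
  set M := M0 c (s + 1) with hM
  have hij : (⟨0, by omega⟩ : Fin (s+1)) ≠ ⟨1, by omega⟩ := by
    simp [Fin.ext_iff]
  set N := updateCol M ⟨0, by omega⟩
      (fun k => M k ⟨0, by omega⟩ + (-(c 2)) • M k ⟨1, by omega⟩) with hN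
  have hdet : N.det = M.det := det_updateCol_add_smul_self M hij (-(c 2))
  -- values of the new first column
  have hcol : ∀ k : Fin (s+1), N k ⟨0, by omega⟩ = c ((k:ℕ)+2) - c 2 * c ((k:ℕ)+1) := by
    intro k
    rw [hN, updateCol_self]
    simp only [hM, M0]
    norm_num
    ring
  have hN0 : ∀ k : Fin (s+1), (k:ℕ) < s → N k ⟨0, by omega⟩ = 0 := by
    intro k hk
    rw [hcol]
    rcases Nat.eq_zero_or_pos (k:ℕ) with h0 | h0
    · rw [h0]; simp [hc1]
    · rw [h ((k:ℕ)+2) (by omega) (by omega), h ((k:ℕ)+1) (by omega) (by omega)]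
      simp only [Nat.add_sub_cancel]
      rw [show (k:ℕ)+2-1 = (k:ℕ)+1 by omega]
      ring
  have hNs : N (Fin.last s) ⟨0, by omega⟩ = c (s+2) - c 2 ^ (s+1) := by
    rw [hcol]
    simp only [Fin.val_last]
    rw [h (s+1) (by omega) (by omega)]
    rw [show s+1-1 = s by omega]
    ring
  -- the minor is lower triangular with unit diagonal
  have hminor : (N.submatrix (Fin.last s).succAbove Fin.succ).det = 1 := by
    have hentry : ∀ a b : Fin s, (N.submatrix (Fin.last s).succAbove Fin.succ) a b
        = if (b:ℕ) ≤ (a:ℕ) then c ((a:ℕ) + 1 - (b:ℕ)) else 0 := by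
      intro a b
      have hb : (Fin.succ b) ≠ (⟨0, by omega⟩ : Fin (s+1)) := by
        simp [Fin.ext_iff]
      rw [submatrix_apply, Fin.succAbove_last, hN, updateCol_ne hb]
      simp only [hM, M0, Fin.coe_castSucc, Fin.val_succ]
      by_cases hba : (b:ℕ) ≤ (a:ℕ)
      · rw [if_pos (by omega), if_pos hba, show (a:ℕ)+2-((b:ℕ)+1) = (a:ℕ)+1-(b:ℕ) by omega]
      · rw [if_neg (by omega), if_neg hba]
    rw [det_of_lowerTriangular _ (fun i j hij => by
      rw [hentry]
      rw [if_neg (by exact_mod_cast Nat.not_le.2 (by exact_mod_cast hij : (i:ℕ) < (j:ℕ)))])]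
    · rw [Finset.prod_congr rfl (fun a _ => by rw [hentry, if_pos le_rfl, Nat.add_sub_cancel_left, hc1])]
      simp
  -- expand along first column
  have hexp : N.det = (-1)^s * (c (s+2) - c 2 ^ (s+1)) := by
    rw [det_succ_column_zero]
    rw [Finset.sum_eq_single_of_mem (Fin.last s) (Finset.mem_univ _)]
    · have : (0 : Fin (s+1)) = ⟨0, by omega⟩ := rfl
      rw [this, hNs, hminor, Fin.val_last]
      ring
    · intro i _ hi
      have : (0 : Fin (s+1)) = ⟨0, by omega⟩ := rfl
      rw [this, hN0 i (by
        have := i.isLt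
        rcases Nat.lt_or_ge (i:ℕ) s with h' | h'
        · exact h'
        · exact absurd (Fin.ext (by omega : (i:ℕ) = s)) hi)]
      ring
  show M.det = _
  rw [← hdet, hexp]

/-- With `c 1 = 1` and all `c k` nonzero: the minors `m 2, ..., m n` all vanish iff
`c k = (c 2)^(k-1)` for `2 ≤ k ≤ n+1`, which in turn holds iff the first two columns
of `M0` are linearly dependent. -/
theorem stmt5 (n : ℕ) (hn : 2 ≤ n) (c : ℕ → ℂ) (hc1 : c 1 = 1)
    (hc : ∀ k, 2 ≤ k → k ≤ n + 1 → c k ≠ 0) :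
    ((∀ r, 2 ≤ r → r ≤ n → pm c r = 0) ↔
      (∀ k, 2 ≤ k → k ≤ n + 1 → c k = c 2 ^ (k - 1))) ∧
    ((∀ k, 2 ≤ k → k ≤ n + 1 → c k = c 2 ^ (k - 1)) ↔
      (∃ lam : ℂ, lam ≠ 0 ∧ ∀ i : Fin n,
        M0 c n i ⟨0, by omega⟩ = lam * M0 c n i ⟨1, by omega⟩)) := by
  have hcol0 : ∀ i : Fin n, M0 c n i ⟨0, by omega⟩ = c ((i:ℕ)+2) := by
    intro i; simp [M0]
  have hcol1 : ∀ i : Fin n, M0 c n i ⟨1, by omega⟩ = c ((i:ℕ)+1) := by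
    intro i
    simp only [M0]
    rw [if_pos (by omega), show (i:ℕ)+2-1 = (i:ℕ)+1 by omega]
  constructor
  · constructor
    · -- vanishing minors imply geometric
      intro H k
      induction k using Nat.strong_induction_on with
      | _ k ih =>
        intro hk2 hkn
        rcases Nat.lt_or_ge k 3 with hk3 | hk3
        · have hk2' : k = 2 := by omega
          subst hk2'; simp
        · -- k ≥ 3; use pm c (k-1) = 0
          have hprev : ∀ j, 2 ≤ j → j ≤ k - 1 → c j = c 2 ^ (j - 1) := by
            intro j hj2 hj
            exact ih j (by omega) hj2 (by omega)
          have hkey := key c hc1 (k-2) (by omega) (by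
            intro j hj2 hj
            exact hprev j hj2 (by omega))
          rw [show k-2+1 = k-1 by omega] at hkey
          rw [H (k-1) (by omega) (by omega)] at hkey
          have hne : ((-1 : ℂ)) ^ (k-2) ≠ 0 := pow_ne_zero _ (by norm_num)
          have hz : c (k-2+2) - c 2 ^ (k-1) = 0 := by
            rcases mul_eq_zero.1 hkey.symm with h1 | h1
            · exact absurd h1 hne
            · exact h1
          rw [show k-2+2 = k by omega] at hz
          linear_combination hz
    · -- geometric implies vanishing minors
      intro H r hr2 hrn
      have hkey := key c hc1 (r-1) (by omega) (by
        intro j hj2 hj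
        exact H j hj2 (by omega))
      rw [show r-1+1 = r by omega, show r-1+2 = r+1 by omega] at hkey
      rw [H (r+1) (by omega) (by omega), show r+1-1 = r by omega] at hkey
      rw [hkey, sub_self, mul_zero]
  · constructor
    · intro H
      refine ⟨c 2, hc 2 le_rfl (by omega), fun i => ?_⟩
      rw [hcol0, hcol1]
      rcases Nat.eq_zero_or_pos (i:ℕ) with h0 | h0
      · rw [h0]; simp [hc1]
      · rw [H ((i:ℕ)+2) (by omega) (by omega : (i:ℕ)+2 ≤ n+1),
            H ((i:ℕ)+1) (by omega) (by omega)]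
        rw [show (i:ℕ)+2-1 = (i:ℕ)+1 by omega, Nat.add_sub_cancel]
        ring
    · rintro ⟨lam, hlam, hl⟩ k
      have hl' : ∀ i : ℕ, i < n → c (i+2) = lam * c (i+1) := by
        intro i hi
        have := hl ⟨i, hi⟩
        rw [hcol0, hcol1] at this
        exact this
      have hlc2 : lam = c 2 := by
        have := hl' 0 (by omega)
        simp [hc1] at this
        rw [this]
      induction k using Nat.strong_induction_on with
      | _ k ih =>
        intro hk2 hkn
        rcases Nat.lt_or_ge k 3 with hk3 | hk3
        · have hk2' : k = 2 := by omega
          subst hk2'; simp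
        · have hprev : c (k-1) = c 2 ^ (k-2) := by
            have := ih (k-1) (by omega) (by omega) (by omega)
            rwa [show k-1-1 = k-2 by omega] at this
          have hstep := hl' (k-2) (by omega)
          rw [show k-2+2 = k by omega, show k-2+1 = k-1 by omega] at hstep
          rw [hstep, hprev, hlc2, show k-1 = k-2+1 by omega]
          ring
end

section
/- The map sending (c_2, ..., c_{n+1}) to the tuple of leading principal minors (m_1, ..., m_n) of the Toeplitz matrix M_0 (with c_1 = 1) is a polynomial bijection: m_r = (-1)^{r+1} c_{r+1} + p_r(c_2, ..., c_r) for some polynomial p_r, and hence the polynomial ring C[c_2, ..., c_{n+1}] equals C[m_1, ..., m_n]. -/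
open Matrix

/-- Toeplitz matrix `M0` over a commutative ring. -/
noncomputable def M0R (R : Type*) [CommRing R] (c : ℕ → R) (n : ℕ) :
    Matrix (Fin n) (Fin n) R :=
  fun i j => if (j : ℕ) ≤ (i : ℕ) + 1 then c ((i : ℕ) + 2 - (j : ℕ)) else 0

/-- Leading principal minors of `M0R`, `pmR R c 0 = 1`. -/
noncomputable def pmR (R : Type*) [CommRing R] (c : ℕ → R) (r : ℕ) : R :=
  (M0R R c r).det

/-- The coefficients `c 2, ..., c (n+1)` as independent variables, with `c 1 = 1` and all
other indices sent to `0`. -/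
noncomputable def cP (n : ℕ) : ℕ → MvPolynomial (Fin n) ℂ := fun k =>
  if h : 2 ≤ k ∧ k ≤ n + 1 then MvPolynomial.X ⟨k - 2, by omega⟩
  else if k = 1 then 1 else 0

/-!
Since `M0` is lower Hessenberg with `c 1 = 1` on its superdiagonal, deleting the last row and
column `j` of `M0 (r + 1)` leaves a block triangular matrix with blocks `M0 j` and a unitriangular
one. Expanding along the last row therefore gives
`m (r + 1) = ∑ j ≤ r, (-1) ^ (r + j) * c (r + 2 - j) * m j`, whose `j = 0` term is
`(-1) ^ r * c (r + 2)` while all other terms involve only `c 1, ..., c (r + 1)`.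
This unitriangular change of variables can be inverted recursively, so the minors generate the
same algebra as the `c`'s.
-/

section Minors

variable {R : Type*} [CommRing R] (c : ℕ → R)

lemma M0R_submatrix_castSucc (m : ℕ) :
    (M0R R c (m + 1)).submatrix Fin.castSucc Fin.castSucc = M0R R c m := rfl

@[simp]
lemma pmR_zero : pmR R c 0 = 1 := det_isEmpty

variable {c}

lemma det_M0R_submatrix_succAbove (hc : c 1 = 1) (r : ℕ) (j : Fin (r + 1)) :
    ((M0R R c (r + 1)).submatrix Fin.castSucc j.succAbove).det = pmR R c j := by
  induction r with
  | zero => simp [Fin.fin_one_eq_zero j]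
  | succ r ih =>
    cases j using Fin.lastCases with
    | last => rw [Fin.succAbove_last, M0R_submatrix_castSucc]; rfl
    | cast j =>
      -- the last column has a single nonzero entry, `c 1 = 1`, in the last row
      have hcol : (j.castSucc.succAbove (Fin.last r)) = Fin.last (r + 1) := by
        rw [Fin.succAbove_of_le_castSucc _ _ (Fin.castSucc_le_castSucc_iff.2 (Fin.le_last j)),
          Fin.succ_last]
      rw [det_succ_column _ (Fin.last r), Finset.sum_eq_single (Fin.last r)]
      · have hminor : (((M0R R c (r + 2)).submatrix Fin.castSucc j.castSucc.succAbove).submatrix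
            (Fin.last r).succAbove (Fin.last r).succAbove)
            = (M0R R c (r + 1)).submatrix Fin.castSucc j.succAbove := by
          ext a b
          simp only [submatrix_apply, Fin.succAbove_last, Fin.castSucc_succAbove_castSucc]
          rfl
        have hentry : M0R R c (r + 2) (Fin.last r).castSucc (Fin.last (r + 1)) = 1 := by
          simp [M0R, hc]
        rw [submatrix_apply, hcol, hentry, hminor, ih, ← two_mul, pow_mul, neg_one_sq, one_pow,
          one_mul, one_mul, Fin.val_castSucc]
      · intro i _ hi
        have hi' : (i : ℕ) < r := Fin.val_lt_last hi
        simp [M0R, hcol, not_le.2 hi']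
      · simp

lemma pmR_succ (hc : c 1 = 1) (r : ℕ) :
    pmR R c (r + 1) = ∑ j : Fin (r + 1), (-1) ^ (r + j : ℕ) * c (r + 2 - j) * pmR R c j := by
  rw [pmR, det_succ_row _ (Fin.last r)]
  refine Finset.sum_congr rfl fun j _ => ?_
  rw [Fin.succAbove_last, det_M0R_submatrix_succAbove hc, M0R, Fin.val_last, if_pos (by omega)]

lemma apply_mem_closure_image_Icc {k m : ℕ} (hk : 1 ≤ k) (hkm : k ≤ m) :
    c k ∈ Subring.closure (c '' Set.Icc 1 m) :=
  Subring.subset_closure ⟨k, ⟨hk, hkm⟩, rfl⟩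

lemma closure_image_Icc_mono {k m : ℕ} (h : k ≤ m) :
    Subring.closure (c '' Set.Icc 1 k) ≤ Subring.closure (c '' Set.Icc 1 m) :=
  Subring.closure_mono (Set.image_mono (Set.Icc_subset_Icc_right h))

lemma pmR_mem_closure (hc : c 1 = 1) (r : ℕ) :
    pmR R c r ∈ Subring.closure (c '' Set.Icc 1 (r + 1)) := by
  induction r using Nat.strong_induction_on with
  | _ r ih =>
    rcases r with _ | r
    · rw [pmR_zero]
      exact one_mem _
    rw [pmR_succ hc]
    refine sum_mem fun j _ => mul_mem (mul_mem (pow_mem (neg_mem (one_mem _)) _) ?_) ?_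
    · exact apply_mem_closure_image_Icc (by omega) (by omega)
    · exact closure_image_Icc_mono (by omega) (ih j (by omega))

lemma pmR_succ_sub_mem_closure (hc : c 1 = 1) (r : ℕ) :
    pmR R c (r + 1) - (-1) ^ r * c (r + 2) ∈ Subring.closure (c '' Set.Icc 1 (r + 1)) := by
  rw [pmR_succ hc, Fin.sum_univ_succ]
  simp only [Fin.val_zero, add_zero, Nat.sub_zero, pmR_zero, mul_one, add_sub_cancel_left,
    Fin.val_succ]
  refine sum_mem fun j _ => mul_mem (mul_mem (pow_mem (neg_mem (one_mem _)) _) ?_) ?_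
  · exact apply_mem_closure_image_Icc (by omega) (by omega)
  · exact closure_image_Icc_mono (by omega) (pmR_mem_closure hc _)

end Minors

theorem Algebra.adjoin_range_eq_of_sub_smul_mem {R A ι : Type*} [CommRing R] [Ring A]
    [Algebra R A] [Preorder ι] [WellFoundedLT ι] (x m : ι → A) (a : ι → Rˣ)
    (h : ∀ i, m i - a i • x i ∈ Algebra.adjoin R (x '' Set.Iio i)) :
    Algebra.adjoin R (Set.range m) = Algebra.adjoin R (Set.range x) := by
  apply le_antisymm
  · refine Algebra.adjoin_le ?_
    rintro _ ⟨i, rfl⟩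
    rw [← sub_add_cancel (m i) (a i • x i), Units.smul_def]
    exact add_mem (Algebra.adjoin_mono (Set.image_subset_range _ _) (h i))
      (Subalgebra.smul_mem _ (Algebra.subset_adjoin (Set.mem_range_self i)) _)
  · refine Algebra.adjoin_le ?_
    rintro _ ⟨i, rfl⟩
    induction i using WellFoundedLT.induction with
    | _ i ih =>
      have hp : m i - a i • x i ∈ Algebra.adjoin R (Set.range m) :=
        Algebra.adjoin_le (by rintro _ ⟨j, hj, rfl⟩; exact ih j hj) (h i)
      rw [← inv_smul_smul (a i) (x i), ← sub_sub_cancel (m i) (a i • x i), Units.smul_def]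
      exact Subalgebra.smul_mem _ (sub_mem (Algebra.subset_adjoin (Set.mem_range_self i)) hp) _

open MvPolynomial

lemma cP_one (n : ℕ) : cP n 1 = 1 := by
  simp [cP]

lemma cP_add_two {n : ℕ} (i : Fin n) : cP n (i + 2) = X i := by
  simp [cP]

lemma cP_mem_supported (n k : ℕ) : cP n k ∈ supported ℂ {i : Fin n | (i : ℕ) + 2 ≤ k} := by
  unfold cP
  split_ifs with h
  · exact X_mem_supported.2 (by simp only [Set.mem_ofPred_eq]; omega)
  all_goals simp

lemma closure_image_cP_le (n k : ℕ) :
    Subring.closure (cP n '' Set.Icc 1 k)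
      ≤ (supported ℂ {i : Fin n | (i : ℕ) + 2 ≤ k}).toSubring := by
  rw [Subring.closure_le]
  rintro _ ⟨m, hm, rfl⟩
  exact supported_mono (fun i hi => le_trans hi hm.2) (cP_mem_supported n m)

theorem stmt6_general (n : ℕ) :
    (∀ r, 1 ≤ r → r ≤ n →
      ∃ p ∈ MvPolynomial.supported ℂ {i : Fin n | (i : ℕ) + 2 ≤ r},
        pmR (MvPolynomial (Fin n) ℂ) (cP n) r
          = (-1 : MvPolynomial (Fin n) ℂ) ^ (r + 1) * cP n (r + 1) + p) ∧
    Algebra.adjoin ℂ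
        (Set.range fun r : Fin n => pmR (MvPolynomial (Fin n) ℂ) (cP n) ((r : ℕ) + 1))
      = ⊤ := by
  have hdecomp (r : ℕ) : pmR _ (cP n) (r + 1) - (-1) ^ (r + 2) * cP n (r + 2)
      ∈ supported ℂ {i : Fin n | (i : ℕ) + 2 ≤ r + 1} := by
    rw [pow_add, neg_one_sq, mul_one]
    exact closure_image_cP_le n (r + 1) (pmR_succ_sub_mem_closure (cP_one n) r)
  refine ⟨fun r hr _ => ?_, ?_⟩
  · obtain ⟨r, rfl⟩ := Nat.exists_eq_add_of_le' hr
    exact ⟨_, hdecomp r, (add_sub_cancel _ _).symm⟩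
  · rw [← adjoin_range_X]
    refine Algebra.adjoin_range_eq_of_sub_smul_mem _ _ (fun i => (-1) ^ ((i : ℕ) + 2)) fun i => ?_
    have hIio : Set.Iio i = {j : Fin n | (j : ℕ) + 2 ≤ i + 1} := by
      ext j
      simp only [Set.mem_Iio, Set.mem_ofPred_eq, Fin.lt_def]
      omega
    rw [← supported_eq_adjoin_X, hIio, Units.smul_def, Algebra.smul_def]
    simpa [cP_add_two] using hdecomp i

/-- Each minor `m r` equals `(-1)^(r+1) c (r+1)` plus a polynomial in `c 2, ..., c r`
only; consequently `ℂ[c 2, ..., c (n+1)] = ℂ[m 1, ..., m n]`. -/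
theorem stmt6 (n : ℕ) (hn : 1 ≤ n) :
    (∀ r, 1 ≤ r → r ≤ n →
      ∃ p ∈ MvPolynomial.supported ℂ {i : Fin n | (i : ℕ) + 2 ≤ r},
        pmR (MvPolynomial (Fin n) ℂ) (cP n) r
          = (-1 : MvPolynomial (Fin n) ℂ) ^ (r + 1) * cP n (r + 1) + p) ∧
    Algebra.adjoin ℂ
        (Set.range fun r : Fin n => pmR (MvPolynomial (Fin n) ℂ) (cP n) ((r : ℕ) + 1))
      = ⊤ :=
  stmt6_general n
end

section
/- The determinant of T(x) = M_0 + x M_1 is a polynomial in x of degree at most n-2, and its coefficient of x^k is a homogeneous polynomial of degree n-k in the variables c_1, ..., c_{n+1}. -/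
open Matrix

/-- The matrix `M1` with ones exactly on the second superdiagonal. -/
noncomputable def M1R (R : Type*) [CommRing R] (n : ℕ) : Matrix (Fin n) (Fin n) R :=
  fun i j => if (j : ℕ) = (i : ℕ) + 2 then 1 else 0

/-- The variables `c 1, ..., c (n+1)` (other indices 0). -/
noncomputable def cV (n : ℕ) : ℕ → MvPolynomial (Fin (n + 1)) ℂ := fun k =>
  if h : 1 ≤ k ∧ k ≤ n + 1 then MvPolynomial.X ⟨k - 1, by omega⟩ else 0

/-!
Give the variable `x` and every `c k` weight one. Then every entry of `T(x)` is homogeneous of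
degree one in `(x, c)`, so `det T(x)` is homogeneous of degree `n` in `(x, c)`; this is the
homogeneity of the coefficients. The first two columns of `M1` vanish, so only `n - 2` columns
of `T(x)` involve `x`, which bounds the degree in `x`.
-/

namespace MvPolynomial

variable {σ R : Type*} [CommRing R]

theorem IsHomogeneous.det {ι : Type*} [Fintype ι] [DecidableEq ι]
    {A : Matrix ι ι (MvPolynomial σ R)} {m : ℕ} (hA : ∀ i j, (A i j).IsHomogeneous m) :
    A.det.IsHomogeneous (Fintype.card ι * m) := by
  rw [Matrix.det_apply]
  refine IsHomogeneous.sum _ _ _ fun τ _ => ?_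
  have hprod := IsHomogeneous.prod Finset.univ (fun i => A (τ i) i) (fun _ => m)
    fun i _ => hA (τ i) i
  rw [Finset.sum_const, Finset.card_univ, smul_eq_mul] at hprod
  rw [← mem_homogeneousSubmodule] at hprod ⊢
  exact Submodule.smul_of_tower_mem _ _ hprod

theorem optionEquivLeft_rename_some (a : MvPolynomial σ R) :
    optionEquivLeft R σ (rename some a) = Polynomial.C a := by
  induction a using MvPolynomial.induction_on with
  | C r => simp [optionEquivLeft_C]
  | add p q hp hq => simp [hp, hq]
  | mul_X p x hp => simp [hp, optionEquivLeft_X_some]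

theorem optionEquivLeft_symm_C (a : MvPolynomial σ R) :
    (optionEquivLeft R σ).symm (Polynomial.C a) = rename some a :=
  ((optionEquivLeft R σ).symm_apply_eq).mpr (optionEquivLeft_rename_some a).symm

theorem isHomogeneous_optionEquivLeft_symm_C_add_X_mul_C {a b : MvPolynomial σ R} {m : ℕ}
    (ha : a.IsHomogeneous (m + 1)) (hb : b.IsHomogeneous m) :
    ((optionEquivLeft R σ).symm (.C a + .X * .C b)).IsHomogeneous (m + 1) := by
  rw [map_add, map_mul, optionEquivLeft_symm_X, optionEquivLeft_symm_C,
    optionEquivLeft_symm_C]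
  refine ha.rename_isHomogeneous.add ?_
  rw [add_comm]
  exact (isHomogeneous_X R none).mul hb.rename_isHomogeneous

theorem isHomogeneous_coeff_det_C_add_X_mul_C [Finite σ] {ι : Type*} [Fintype ι]
    [DecidableEq ι] {A B : Matrix ι ι (MvPolynomial σ R)} (hA : ∀ i j, (A i j).IsHomogeneous 1)
    (hB : ∀ i j, (B i j).IsHomogeneous 0) {k : ℕ} (hk : k ≤ Fintype.card ι) :
    ((Matrix.det fun i j => Polynomial.C (A i j) + Polynomial.X * Polynomial.C (B i j)).coeff
      k).IsHomogeneous (Fintype.card ι - k) := by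
  refine IsHomogeneous.coeff_isHomogeneous_of_optionEquivLeft_symm ?_ k _ (Nat.add_sub_of_le hk)
  rw [AlgEquiv.map_det (optionEquivLeft R σ).symm
    (fun i j => Polynomial.C (A i j) + Polynomial.X * Polynomial.C (B i j))]
  have hdet := IsHomogeneous.det fun i j =>
    isHomogeneous_optionEquivLeft_symm_C_add_X_mul_C (hA i j) (hB i j)
  rwa [zero_add, mul_one] at hdet

end MvPolynomial

namespace Polynomial

variable {R : Type*} [CommRing R]

theorem natDegree_det_le_sum {ι : Type*} [Fintype ι] [DecidableEq ι]
    {A : Matrix ι ι R[X]} {d : ι → ℕ} (hA : ∀ i j, (A i j).natDegree ≤ d j) :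
    A.det.natDegree ≤ ∑ j, d j := by
  rw [Matrix.det_apply]
  refine natDegree_sum_le_of_forall_le _ _ fun τ _ => ?_
  calc (Equiv.Perm.sign τ • ∏ i, A (τ i) i).natDegree
      ≤ (∏ i, A (τ i) i).natDegree := natDegree_smul_le _ _
    _ ≤ ∑ i, (A (τ i) i).natDegree := natDegree_prod_le _ _
    _ ≤ ∑ j, d j := Finset.sum_le_sum fun i _ => hA (τ i) i

end Polynomial

theorem isHomogeneous_cV (n k : ℕ) : (cV n k).IsHomogeneous 1 := by
  unfold cV
  split_ifs
  · exact MvPolynomial.isHomogeneous_X _ _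
  · exact MvPolynomial.isHomogeneous_zero _ _ _

theorem isHomogeneous_M0R {σ R : Type*} [CommRing R] {c : ℕ → MvPolynomial σ R} {m : ℕ}
    (hc : ∀ k, (c k).IsHomogeneous m) (n : ℕ) (i j : Fin n) :
    (M0R (MvPolynomial σ R) c n i j).IsHomogeneous m := by
  unfold M0R
  split_ifs
  · exact hc _
  · exact MvPolynomial.isHomogeneous_zero _ _ _

theorem isHomogeneous_M1R {σ R : Type*} [CommRing R] (n : ℕ) (i j : Fin n) :
    (M1R (MvPolynomial σ R) n i j).IsHomogeneous 0 := by
  unfold M1R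
  split_ifs
  · exact MvPolynomial.isHomogeneous_one _ _
  · exact MvPolynomial.isHomogeneous_zero _ _ _

theorem natDegree_C_add_X_mul_C_M1R_le {R : Type*} [CommRing R] {n : ℕ} (a : R) (i j : Fin n) :
    (Polynomial.C a + Polynomial.X * Polynomial.C (M1R R n i j)).natDegree
      ≤ if 2 ≤ (j : ℕ) then 1 else 0 := by
  split_ifs with hj
  · compute_degree
  · have hM1 : M1R R n i j = 0 := if_neg (by omega)
    simp [hM1]

theorem Fin.sum_univ_ite_two_le (n : ℕ) : ∑ j : Fin n, (if 2 ≤ (j : ℕ) then 1 else 0) = n - 2 := by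
  rw [Fin.sum_univ_eq_sum_range (fun j => if 2 ≤ j then 1 else 0), Finset.sum_boole,
    Nat.cast_id, ← Nat.card_Ico]
  congr 1
  ext j
  simp only [Finset.mem_filter, Finset.mem_range, Finset.mem_Ico]
  omega

theorem stmt7_general (n : ℕ) :
    (Matrix.det (fun i j : Fin n =>
        Polynomial.C (M0R (MvPolynomial (Fin (n + 1)) ℂ) (cV n) n i j)
          + Polynomial.X * Polynomial.C (M1R (MvPolynomial (Fin (n + 1)) ℂ) n i j))).degree
        ≤ ((n - 2 : ℕ) : WithBot ℕ) ∧
    ∀ k : ℕ,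
      ((Matrix.det (fun i j : Fin n =>
          Polynomial.C (M0R (MvPolynomial (Fin (n + 1)) ℂ) (cV n) n i j)
            + Polynomial.X * Polynomial.C (M1R (MvPolynomial (Fin (n + 1)) ℂ) n i j))).coeff
          k).IsHomogeneous (n - k) := by
  have hdeg := (Polynomial.natDegree_det_le_sum fun i j => natDegree_C_add_X_mul_C_M1R_le
    (M0R (MvPolynomial (Fin (n + 1)) ℂ) (cV n) n i j) i j).trans (Fin.sum_univ_ite_two_le n).le
  refine ⟨Polynomial.degree_le_of_natDegree_le hdeg, fun k => ?_⟩
  rcases le_or_gt k n with hk | hk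
  · simpa only [Fintype.card_fin] using MvPolynomial.isHomogeneous_coeff_det_C_add_X_mul_C
      (isHomogeneous_M0R (isHomogeneous_cV n) n) (isHomogeneous_M1R n)
      (hk.trans_eq (Fintype.card_fin n).symm)
  · rw [Polynomial.coeff_eq_zero_of_natDegree_lt (by omega)]
    exact MvPolynomial.isHomogeneous_zero _ _ _

/-- `det T(x)` has degree at most `n - 2` in `x`, and its coefficient of `x^k` is a
homogeneous polynomial of degree `n - k` in `c 1, ..., c (n+1)`. -/
theorem stmt7 (n : ℕ) (hn : 2 ≤ n) :
    (Matrix.det (fun i j : Fin n =>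
        Polynomial.C (M0R (MvPolynomial (Fin (n + 1)) ℂ) (cV n) n i j)
          + Polynomial.X * Polynomial.C (M1R (MvPolynomial (Fin (n + 1)) ℂ) n i j))).degree
        ≤ ((n - 2 : ℕ) : WithBot ℕ) ∧
    ∀ k : ℕ,
      ((Matrix.det (fun i j : Fin n =>
          Polynomial.C (M0R (MvPolynomial (Fin (n + 1)) ℂ) (cV n) n i j)
            + Polynomial.X * Polynomial.C (M1R (MvPolynomial (Fin (n + 1)) ℂ) n i j))).coeff
          k).IsHomogeneous (n - k) :=
  stmt7_general n
end

section
/- For n = 3 the Töplitz pencil conjecture holds: if c_1, ..., c_4 are nonzero complex numbers and det(M_0 + x M_1) = 0 as a polynomial in x, where M_0 = [[c_2,c_1,0],[c_3,c_2,c_1],[c_4,c_3,c_2]] and M_1 has a single 1 in position (1,3), then c_{k+1} = λ c_k for k = 1,2,3 with λ = c_2/c_1. -/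
open Matrix Polynomial

/-- The Töplitz pencil conjecture for `n = 3`: if `c 1, ..., c 4` are nonzero and
`det (M0 + x M1) = 0` as a polynomial in `x`, then `c (k+1) = λ c k` for `k = 1, 2, 3`
with `λ = c 2 / c 1`. -/
theorem stmt14 (c : ℕ → ℂ) (hc : ∀ k, 1 ≤ k → k ≤ 4 → c k ≠ 0)
    (hdet : Matrix.det
      !![C (c 2), C (c 1), X;
         C (c 3), C (c 2), C (c 1);
         C (c 4), C (c 3), C (c 2)] = 0) :
    ∀ k, 1 ≤ k → k ≤ 3 → c (k + 1) = (c 2 / c 1) * c k := by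
  simp [Matrix.det_fin_three] at hdet
  have h0 := congrArg (fun p => Polynomial.coeff p 0) hdet
  have h1 := congrArg (fun p => Polynomial.coeff p 1) hdet
  simp at h0 h1
  have hc1 := hc 1 (by norm_num) (by norm_num)
  have hc2 := hc 2 (by norm_num) (by norm_num)
  have key : c 2 ^ 2 = c 1 * c 3 := by
    have hsq : (c 2 ^ 2 - c 1 * c 3) ^ 2 = 0 := by
      linear_combination (c 2) * h0 + (c 1) ^ 2 * h1
    have := sq_eq_zero_iff.mp hsq
    linear_combination this
  intro k hk1 hk3
  interval_cases k
  all_goals norm_num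
  · field_simp
  · field_simp
    linear_combination -key
  · field_simp
    have h : c 2 * (c 1 * c 4) = c 2 * (c 2 * c 3) := by
      linear_combination -(c 1) * h1 - (c 3) * key
    have h' := mul_left_cancel₀ hc2 h
    linear_combination h'
end

section
/- With notation as in the pencil decomposition and c_1, ..., c_{n+1} nonzero, if the conditions (S) hold -- namely w Q^{-1} (B Q^{-1})^k v = 0 for all k ≥ 1 and w Q^{-1} v = c_{n+1} -- and additionally B Q^{-1} v ≠ 0, then setting A = -B Q^{-1} and letting d be minimal with Av, ..., A^{d+1}v linearly dependent, there exists a nonzero polynomial vector f(x) of degree d with (M_0 + x M_1) f(x) = 0; in particular det(M_0 + x M_1) = 0 in C[x]. -/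
open Matrix

noncomputable def M1mat (n : ℕ) : Matrix (Fin n) (Fin n) ℂ :=
  fun i j => if (j : ℕ) = (i : ℕ) + 2 then 1 else 0

noncomputable def Bmat (s : ℕ) : Matrix (Fin s) (Fin s) ℂ :=
  fun i j => if (j : ℕ) = (i : ℕ) + 1 then 1 else 0

/-!
Split a kernel vector as `f(x) = (a(x), g(x))` along the block form. The top block of
`(M₀ + x M₁) f = 0` reads `a(x) v + (Q + x B) g(x) = 0`, solved formally by
`g(x) = -Q⁻¹ (1 - x A)⁻¹ v a(x)` with `A = -B Q⁻¹`; since `w Q⁻¹ Aᵏ v` is `c (n+1)` for `k = 0`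
and `0` for `k ≥ 1`, conditions (S) make the bottom row `c (n+1) a(x) + w g(x) = 0` hold
automatically. If `∑ bᵢ Aⁱ⁺¹ v = 0` is the minimal relation, the reversed polynomial
`a(x) = b_d + b_{d-1} x + ⋯ + b₀ xᵈ` turns the power series `g` into a polynomial of degree `≤ d`,
and minimality of `d` makes the coefficient of `xᵈ` in `f` nonzero.
-/

open Polynomial Finset

section PencilKernel

variable {R : Type*} [CommRing R] {ι : Type*}

theorem pencil_row_eq_zero [Fintype ι] (M₀ M₁ : Matrix ι ι R) (f : ι → R[X])
    (h₀ : M₀ *ᵥ (fun j => (f j).coeff 0) = 0)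
    (hstep : ∀ k, M₀ *ᵥ (fun j => (f j).coeff (k + 1)) + M₁ *ᵥ (fun j => (f j).coeff k) = 0)
    (i : ι) : ∑ j, (C (M₀ i j) + X * C (M₁ i j)) * f j = 0 := by
  ext k
  simp only [finsetSum_coeff, add_mul, coeff_add, mul_assoc, coeff_C_mul, coeff_zero]
  cases k with
  | zero => simpa [mulVec, dotProduct] using congrFun h₀ i
  | succ k =>
    simpa [mulVec, dotProduct, coeff_X_mul, Finset.sum_add_distrib] using congrFun (hstep k) i

noncomputable def polyVecOfCoeffs (F : ℕ → ι → R) (d : ℕ) (j : ι) : R[X] :=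
  ∑ k ∈ range (d + 1), C (F k j) * X ^ k

theorem coeff_polyVecOfCoeffs {F : ℕ → ι → R} {d : ℕ} (hF : ∀ k, d < k → F k = 0) (j : ι)
    (k : ℕ) : (polyVecOfCoeffs F d j).coeff k = F k j := by
  simp only [polyVecOfCoeffs, finsetSum_coeff, coeff_C_mul_X_pow, Finset.sum_ite_eq,
    Finset.mem_range]
  split_ifs with hk
  · rfl
  · rw [hF k (by omega), Pi.zero_apply]

theorem degree_polyVecOfCoeffs_le (F : ℕ → ι → R) (d : ℕ) (j : ι) :
    (polyVecOfCoeffs F d j).degree ≤ d := by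
  refine (degree_sum_le _ _).trans (Finset.sup_le fun k hk => ?_)
  exact (degree_C_mul_X_pow_le k _).trans (by exact_mod_cast Finset.mem_range_succ_iff.mp hk)

theorem exists_pencil_kernel_vector [Fintype ι] (M₀ M₁ : Matrix ι ι R) (F : ℕ → ι → R) (d : ℕ)
    (hF : ∀ k, d < k → F k = 0) (hd : F d ≠ 0) (h₀ : M₀ *ᵥ F 0 = 0)
    (hstep : ∀ k, M₀ *ᵥ F (k + 1) + M₁ *ᵥ F k = 0) :
    ∃ f : ι → R[X], f ≠ 0 ∧ (∀ i, (f i).degree ≤ d) ∧ (∃ i, (f i).degree = d) ∧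
      ∀ i, ∑ j, (C (M₀ i j) + X * C (M₁ i j)) * f j = 0 := by
  have hcoeff := coeff_polyVecOfCoeffs hF
  obtain ⟨i, hi⟩ := Function.ne_iff.mp hd
  refine ⟨polyVecOfCoeffs F d, fun h => hi ?_, degree_polyVecOfCoeffs_le F d, ⟨i, ?_⟩,
    pencil_row_eq_zero M₀ M₁ _ (by simpa only [hcoeff]) (by simpa only [hcoeff])⟩
  · rw [← hcoeff, h, Pi.zero_apply, coeff_zero, Pi.zero_apply]
  · refine (degree_polyVecOfCoeffs_le F d i).antisymm (le_degree_of_ne_zero ?_)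
    rwa [hcoeff]

end PencilKernel

section Relation

variable {K V : Type*} [Field K] [AddCommGroup V] [Module K V]

theorem exists_relation_last_ne_zero (u : ℕ → V) (e : ℕ)
    (hind : LinearIndependent K fun i : Fin (e + 1) => u (i + 1))
    (hdep : ¬ LinearIndependent K fun i : Fin (e + 2) => u (i + 1)) :
    ∃ b : Fin (e + 2) → K, ∑ i, b i • u (i + 1) = 0 ∧ b (Fin.last _) ≠ 0 := by
  obtain ⟨b, hb, i₀, hi₀⟩ := Fintype.not_linearIndependent_iff.mp hdep
  refine ⟨b, hb, fun hlast => hi₀ ?_⟩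
  rw [Fin.sum_univ_castSucc, hlast, zero_smul, add_zero] at hb
  have hinit := Fintype.linearIndependent_iff.mp hind (fun i => b i.castSucc) hb
  induction i₀ using Fin.lastCases with
  | last => exact hlast
  | cast i => exact hinit i

theorem sum_smul_ne_zero_of_head_eq_zero (u : ℕ → V) (e : ℕ)
    (hind : LinearIndependent K fun i : Fin (e + 1) => u (i + 1)) (b : Fin (e + 2) → K)
    (hlast : b (Fin.last _) ≠ 0) (hhead : b 0 = 0) : ∑ i, b i • u i ≠ 0 := by
  intro hsum
  rw [Fin.sum_univ_succ, hhead, zero_smul, zero_add] at hsum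
  exact hlast (Fintype.linearIndependent_iff.mp hind (fun i => b i.succ) hsum (Fin.last e))

end Relation

def revCoeffs {R : Type*} [Zero R] {d : ℕ} (b : Fin (d + 1) → R) (k : ℕ) : R :=
  if h : k ≤ d then b (Fin.rev ⟨k, Nat.lt_succ_of_le h⟩) else 0

section Krylov

variable {R : Type*} [CommRing R] {ι : Type*} [Fintype ι] [DecidableEq ι]

/-- The coefficient of `xᵏ` in `a(x) (1 - x A)⁻¹ v`. -/
noncomputable def krylovConv (A : Matrix ι ι R) (v : ι → R) (a : ℕ → R) (k : ℕ) : ι → R :=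
  ∑ j ∈ range (k + 1), a (k - j) • (A ^ j *ᵥ v)

variable (A : Matrix ι ι R) (v : ι → R) (a : ℕ → R)

theorem krylovConv_zero : krylovConv A v a 0 = a 0 • v := by
  simp [krylovConv]

theorem krylovConv_succ (k : ℕ) :
    krylovConv A v a (k + 1) = a (k + 1) • v + A *ᵥ krylovConv A v a k := by
  rw [krylovConv, sum_range_succ', krylovConv, mulVec_sum, add_comm]
  simp [mulVec_smul, mulVec_mulVec, pow_succ']

theorem krylovConv_eq_zero_of_lt {d : ℕ} (ha : ∀ k, d < k → a k = 0)
    (htop : A *ᵥ krylovConv A v a d = 0) {k : ℕ} (hk : d < k) : krylovConv A v a k = 0 := by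
  induction k, hk using Nat.le_induction with
  | base => rw [krylovConv_succ, ha _ d.lt_succ_self, zero_smul, zero_add, htop]
  | succ k hk ih => rw [krylovConv_succ, ha _ (by omega), zero_smul, zero_add, ih, mulVec_zero]

theorem krylovConv_revCoeffs {d : ℕ} (b : Fin (d + 1) → R) :
    krylovConv A v (revCoeffs b) d = ∑ i, b i • (A ^ (i : ℕ) *ᵥ v) := by
  rw [krylovConv, sum_range]
  refine Fintype.sum_congr _ _ fun i => ?_
  rw [revCoeffs, dif_pos (by omega)]
  congr
  ext
  simp only [Fin.val_rev]
  omega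

theorem dotProduct_krylovConv (φ : ι → R) (hφ : ∀ j, 1 ≤ j → φ ⬝ᵥ (A ^ j *ᵥ v) = 0) (k : ℕ) :
    φ ⬝ᵥ krylovConv A v a k = a k * (φ ⬝ᵥ v) := by
  rw [krylovConv, dotProduct_sum, sum_eq_single 0]
  · simp
  · intro j _ hj
    rw [dotProduct_smul, hφ j (Nat.one_le_iff_ne_zero.mpr hj), smul_zero]
  · simp

end Krylov

section BlockPencil

variable {R : Type*} [CommRing R] {ι : Type*} [Fintype ι] [DecidableEq ι]
  (Q B : Matrix ι ι R) (v : ι → R) (a : ℕ → R)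

noncomputable def blockKernelTail (k : ℕ) : ι → R :=
  -(Q⁻¹ *ᵥ krylovConv (-(B * Q⁻¹)) v a k)

variable {Q}

theorem mulVec_blockKernelTail (hQ : IsUnit Q.det) (k : ℕ) :
    Q *ᵥ blockKernelTail Q B v a k = -krylovConv (-(B * Q⁻¹)) v a k := by
  rw [blockKernelTail, mulVec_neg, mulVec_mulVec, mul_nonsing_inv Q hQ, one_mulVec]

theorem smul_add_mulVec_blockKernelTail_zero (hQ : IsUnit Q.det) :
    a 0 • v + Q *ᵥ blockKernelTail Q B v a 0 = 0 := by
  rw [mulVec_blockKernelTail B v a hQ, krylovConv_zero, add_neg_cancel]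

theorem smul_add_mulVec_blockKernelTail_succ (hQ : IsUnit Q.det) (k : ℕ) :
    a (k + 1) • v + Q *ᵥ blockKernelTail Q B v a (k + 1) + B *ᵥ blockKernelTail Q B v a k = 0 := by
  rw [mulVec_blockKernelTail B v a hQ, krylovConv_succ, blockKernelTail, mulVec_neg,
    mulVec_mulVec, ← neg_mulVec]
  abel

theorem mul_add_dotProduct_blockKernelTail (w : ι → R) (γ : R)
    (hS₁ : ∀ k, 1 ≤ k → w ⬝ᵥ ((Q⁻¹ * (B * Q⁻¹) ^ k) *ᵥ v) = 0)
    (hS₂ : w ⬝ᵥ (Q⁻¹ *ᵥ v) = γ) (k : ℕ) :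
    γ * a k + w ⬝ᵥ blockKernelTail Q B v a k = 0 := by
  have hφ : ∀ j, 1 ≤ j → (w ᵥ* Q⁻¹) ⬝ᵥ ((-(B * Q⁻¹)) ^ j *ᵥ v) = 0 := fun j hj => by
    rw [← dotProduct_mulVec, mulVec_mulVec, neg_pow, ← mul_assoc]
    rcases neg_one_pow_eq_or (Matrix ι ι R) j with h | h <;> simp [h, neg_mulVec, hS₁ j hj]
  rw [blockKernelTail, dotProduct_neg, dotProduct_mulVec, dotProduct_krylovConv _ _ _ _ hφ,
    ← dotProduct_mulVec, hS₂]
  ring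

end BlockPencil

section Pencil

variable {c : ℕ → ℂ} {m : ℕ}

theorem M0_mulVec_cons_castSucc (x : ℂ) (y : Fin m → ℂ) (i : Fin m) :
    (M0 c (m + 1) *ᵥ vecCons x y) i.castSucc =
      (x • (fun i : Fin m => c (i + 2)) + Qmat c m *ᵥ y) i := by
  simp only [mulVec, dotProduct, Fin.sum_univ_succ, cons_val_zero, cons_val_succ,
    M0, Qmat, Fin.val_castSucc, Fin.val_succ, Fin.val_zero, Pi.add_apply, Pi.smul_apply]
  congr 1
  · simp [mul_comm]
  refine Finset.sum_congr rfl fun j _ => ?_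
  by_cases h : (j : ℕ) ≤ i
  · rw [if_pos (by omega), if_pos h, show (i : ℕ) + 2 - (j + 1) = i + 1 - j by omega]
  · rw [if_neg (by omega), if_neg h]

theorem M0_mulVec_cons_last (x : ℂ) (y : Fin m → ℂ) :
    (M0 c (m + 1) *ᵥ vecCons x y) (Fin.last m) =
      c (m + 2) * x + (fun i : Fin m => c (m + 1 - i)) ⬝ᵥ y := by
  simp only [mulVec, dotProduct, Fin.sum_univ_succ, cons_val_zero, cons_val_succ,
    M0, Fin.val_last, Fin.val_succ, Fin.val_zero]
  congr 1
  refine Finset.sum_congr rfl fun j _ => ?_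
  rw [if_pos (by omega), show m + 2 - ((j : ℕ) + 1) = m + 1 - j by omega]

theorem M1mat_mulVec_cons_castSucc (x : ℂ) (y : Fin m → ℂ) (i : Fin m) :
    (M1mat (m + 1) *ᵥ vecCons x y) i.castSucc = (Bmat m *ᵥ y) i := by
  simp only [mulVec, dotProduct, Fin.sum_univ_succ, cons_val_zero, cons_val_succ,
    M1mat, Bmat, Fin.val_castSucc, Fin.val_succ, Fin.val_zero]
  simp only [show ¬(0 = (i : ℕ) + 2) by omega, if_false, zero_mul, zero_add]
  refine Finset.sum_congr rfl fun j _ => ?_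
  by_cases h : (j : ℕ) = i + 1
  · rw [if_pos (by omega), if_pos h]
  · rw [if_neg (by omega), if_neg h]

theorem M1mat_mulVec_cons_last (x : ℂ) (y : Fin m → ℂ) :
    (M1mat (m + 1) *ᵥ vecCons x y) (Fin.last m) = 0 := by
  simp only [mulVec, dotProduct, Fin.sum_univ_succ, cons_val_zero, cons_val_succ,
    M1mat, Fin.val_last, Fin.val_succ, Fin.val_zero]
  simp only [show ¬(0 = m + 2) by omega, if_false, zero_mul, zero_add]
  exact Finset.sum_eq_zero fun j _ => by rw [if_neg (by omega), zero_mul]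

theorem isUnit_det_Qmat (hc : c 1 ≠ 0) : IsUnit (Qmat c m).det := by
  have hlow : (Qmat c m).IsLowerTriangular := fun i j (hij : i < j) => if_neg (not_le.mpr hij)
  rw [det_of_isLowerTriangular _ hlow]
  simpa [Qmat] using (pow_ne_zero m hc).isUnit

variable (c m) in
noncomputable def kernelCoeff (a : ℕ → ℂ) (k : ℕ) : Fin (m + 1) → ℂ :=
  vecCons (a k) (blockKernelTail (Qmat c m) (Bmat m) (fun i => c (i + 2)) a k)

section KernelRecursion

variable (a : ℕ → ℂ) (hQ : IsUnit (Qmat c m).det)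
  (hS₁ : ∀ k, 1 ≤ k → (fun i : Fin m => c (m + 1 - i)) ⬝ᵥ
    (((Qmat c m)⁻¹ * (Bmat m * (Qmat c m)⁻¹) ^ k) *ᵥ fun i : Fin m => c (i + 2)) = 0)
  (hS₂ : (fun i : Fin m => c (m + 1 - i)) ⬝ᵥ
    ((Qmat c m)⁻¹ *ᵥ fun i : Fin m => c (i + 2)) = c (m + 2))
include hQ hS₁ hS₂

theorem M0_mulVec_kernelCoeff_zero : M0 c (m + 1) *ᵥ kernelCoeff c m a 0 = 0 := by
  ext i
  induction i using Fin.lastCases with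
  | last =>
    rw [kernelCoeff, M0_mulVec_cons_last]
    exact mul_add_dotProduct_blockKernelTail _ _ a _ _ hS₁ hS₂ 0
  | cast i =>
    rw [kernelCoeff, M0_mulVec_cons_castSucc]
    exact congrFun (smul_add_mulVec_blockKernelTail_zero _ _ a hQ) i

theorem M0_mulVec_kernelCoeff_succ_add_M1mat_mulVec (k : ℕ) :
    M0 c (m + 1) *ᵥ kernelCoeff c m a (k + 1) + M1mat (m + 1) *ᵥ kernelCoeff c m a k = 0 := by
  ext i
  induction i using Fin.lastCases with
  | last =>
    rw [Pi.add_apply, kernelCoeff, kernelCoeff, M0_mulVec_cons_last, M1mat_mulVec_cons_last,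
      add_zero]
    exact mul_add_dotProduct_blockKernelTail _ _ a _ _ hS₁ hS₂ (k + 1)
  | cast i =>
    rw [Pi.add_apply, kernelCoeff, kernelCoeff, M0_mulVec_cons_castSucc,
      M1mat_mulVec_cons_castSucc]
    exact congrFun (smul_add_mulVec_blockKernelTail_succ _ _ a hQ k) i

end KernelRecursion

theorem kernelCoeff_revCoeffs_eq_zero_of_lt {d : ℕ} (b : Fin (d + 1) → ℂ)
    (hb : ∑ i, b i • ((-(Bmat m * (Qmat c m)⁻¹)) ^ ((i : ℕ) + 1) *ᵥ
      fun i : Fin m => c (i + 2)) = 0)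
    {k : ℕ} (hk : d < k) : kernelCoeff c m (revCoeffs b) k = 0 := by
  have htop : -(Bmat m * (Qmat c m)⁻¹) *ᵥ
      krylovConv (-(Bmat m * (Qmat c m)⁻¹)) (fun i => c (i + 2)) (revCoeffs b) d = 0 := by
    rw [krylovConv_revCoeffs, mulVec_sum, ← hb]
    simp only [mulVec_smul, mulVec_mulVec, pow_succ']
  have hrev : ∀ j, d < j → revCoeffs b j = 0 := fun j hj => dif_neg (by omega)
  rw [kernelCoeff, blockKernelTail, krylovConv_eq_zero_of_lt _ _ _ hrev htop hk, hrev k hk]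
  simp

theorem kernelCoeff_revCoeffs_ne_zero (hQ : IsUnit (Qmat c m).det) {e : ℕ}
    (hind : LinearIndependent ℂ fun i : Fin (e + 1) =>
      (-(Bmat m * (Qmat c m)⁻¹)) ^ ((i : ℕ) + 1) *ᵥ fun i : Fin m => c (i + 2))
    (b : Fin (e + 2) → ℂ) (hlast : b (Fin.last _) ≠ 0) :
    kernelCoeff c m (revCoeffs b) (e + 1) ≠ 0 := by
  rw [kernelCoeff, Ne, cons_eq_zero_iff, not_and]
  intro hhead htail
  have hkrylov := mulVec_blockKernelTail (Bmat m) (fun i => c (i + 2)) (revCoeffs b) hQ (e + 1)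
  rw [htail, mulVec_zero, zero_eq_neg, krylovConv_revCoeffs] at hkrylov
  refine sum_smul_ne_zero_of_head_eq_zero
    (fun j => (-(Bmat m * (Qmat c m)⁻¹)) ^ j *ᵥ fun i : Fin m => c (i + 2)) e hind b hlast ?_
    hkrylov
  rw [revCoeffs, dif_pos le_rfl] at hhead
  convert hhead using 2
  exact (Fin.rev_last _).symm

end Pencil

theorem stmt16_general (n : ℕ) (c : ℕ → ℂ)
    (hc : ∀ k, 1 ≤ k → k ≤ n + 1 → c k ≠ 0)
    (hS1 : ∀ k, 1 ≤ k →
      (fun i : Fin (n - 1) => c (n - (i : ℕ))) ⬝ᵥ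
        (((Qmat c (n - 1))⁻¹ * (Bmat (n - 1) * (Qmat c (n - 1))⁻¹) ^ k) *ᵥ
          fun i : Fin (n - 1) => c ((i : ℕ) + 2)) = 0)
    (hS2 : (fun i : Fin (n - 1) => c (n - (i : ℕ))) ⬝ᵥ
        ((Qmat c (n - 1))⁻¹ *ᵥ fun i : Fin (n - 1) => c ((i : ℕ) + 2)) = c (n + 1))
    (hBv : (Bmat (n - 1) * (Qmat c (n - 1))⁻¹) *ᵥ (fun i : Fin (n - 1) => c ((i : ℕ) + 2))
            ≠ 0)
    (d : ℕ)
    (hld : ¬ LinearIndependent ℂ fun i : Fin (d + 1) =>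
      ((-(Bmat (n - 1) * (Qmat c (n - 1))⁻¹)) ^ ((i : ℕ) + 1)) *ᵥ
        fun i : Fin (n - 1) => c ((i : ℕ) + 2))
    (hmin : ∀ e < d, LinearIndependent ℂ fun i : Fin (e + 1) =>
      ((-(Bmat (n - 1) * (Qmat c (n - 1))⁻¹)) ^ ((i : ℕ) + 1)) *ᵥ
        fun i : Fin (n - 1) => c ((i : ℕ) + 2)) :
    (∃ f : Fin n → Polynomial ℂ, f ≠ 0 ∧ (∀ i, (f i).degree ≤ (d : ℕ)) ∧
      (∃ i, (f i).degree = (d : ℕ)) ∧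
      ∀ i, ∑ j, (Polynomial.C (M0 c n i j) + Polynomial.X * Polynomial.C (M1mat n i j))
        * f j = 0) ∧
    Matrix.det (fun i j : Fin n =>
      Polynomial.C (M0 c n i j) + Polynomial.X * Polynomial.C (M1mat n i j)) = 0 := by
  obtain ⟨m, rfl⟩ : ∃ m, n = m + 1 := Nat.exists_eq_add_one.mpr <| Nat.pos_of_ne_zero
    fun hn => hBv (funext fun i => absurd i.isLt (by omega))
  have hQ : IsUnit (Qmat c m).det := isUnit_det_Qmat (hc 1 le_rfl (by omega))
  obtain ⟨e, rfl⟩ : ∃ e, d = e + 1 := by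
    refine Nat.exists_eq_add_one.mpr (Nat.pos_of_ne_zero fun hd => hld ?_)
    subst hd
    exact (linearIndependent_unique_iff (ι := Fin 1)).mpr (by simpa [neg_mulVec] using hBv)
  obtain ⟨b, hb, hlast⟩ := exists_relation_last_ne_zero
    (fun j => (-(Bmat m * (Qmat c m)⁻¹)) ^ j *ᵥ fun i : Fin m => c (i + 2)) e
    (hmin e e.lt_succ_self) hld
  obtain ⟨f, hf, hdeg, hdeg_eq, hrows⟩ := exists_pencil_kernel_vector (M0 c (m + 1))
    (M1mat (m + 1)) (kernelCoeff c m (revCoeffs b)) (e + 1)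
    (fun _ => kernelCoeff_revCoeffs_eq_zero_of_lt b hb)
    (kernelCoeff_revCoeffs_ne_zero hQ (hmin e e.lt_succ_self) b hlast)
    (M0_mulVec_kernelCoeff_zero _ hQ hS1 hS2)
    (M0_mulVec_kernelCoeff_succ_add_M1mat_mulVec _ hQ hS1 hS2)
  exact ⟨⟨f, hf, hdeg, hdeg_eq, hrows⟩, exists_mulVec_eq_zero_iff.mp ⟨f, hf, funext hrows⟩⟩

/-- Sufficiency in Criterion (S): if `w Q⁻¹ (B Q⁻¹)^k v = 0` for all `k ≥ 1`,
`w Q⁻¹ v = c (n+1)`, and `B Q⁻¹ v ≠ 0`, then with `A = -B Q⁻¹` and `d` minimal such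
that `A v, ..., A^(d+1) v` are linearly dependent, the equation `(M0 + x M1) f(x) = 0`
has a nonzero solution of degree `d`; in particular `det (M0 + x M1) = 0` in `ℂ[x]`. -/
theorem stmt16 (n : ℕ) (hn : 3 ≤ n) (c : ℕ → ℂ)
    (hc : ∀ k, 1 ≤ k → k ≤ n + 1 → c k ≠ 0)
    (hS1 : ∀ k, 1 ≤ k →
      (fun i : Fin (n - 1) => c (n - (i : ℕ))) ⬝ᵥ
        (((Qmat c (n - 1))⁻¹ * (Bmat (n - 1) * (Qmat c (n - 1))⁻¹) ^ k) *ᵥ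
          fun i : Fin (n - 1) => c ((i : ℕ) + 2)) = 0)
    (hS2 : (fun i : Fin (n - 1) => c (n - (i : ℕ))) ⬝ᵥ
        ((Qmat c (n - 1))⁻¹ *ᵥ fun i : Fin (n - 1) => c ((i : ℕ) + 2)) = c (n + 1))
    (hBv : (Bmat (n - 1) * (Qmat c (n - 1))⁻¹) *ᵥ (fun i : Fin (n - 1) => c ((i : ℕ) + 2))
            ≠ 0)
    (d : ℕ)
    (hld : ¬ LinearIndependent ℂ fun i : Fin (d + 1) =>
      ((-(Bmat (n - 1) * (Qmat c (n - 1))⁻¹)) ^ ((i : ℕ) + 1)) *ᵥ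
        fun i : Fin (n - 1) => c ((i : ℕ) + 2))
    (hmin : ∀ e < d, LinearIndependent ℂ fun i : Fin (e + 1) =>
      ((-(Bmat (n - 1) * (Qmat c (n - 1))⁻¹)) ^ ((i : ℕ) + 1)) *ᵥ
        fun i : Fin (n - 1) => c ((i : ℕ) + 2)) :
    (∃ f : Fin n → Polynomial ℂ, f ≠ 0 ∧ (∀ i, (f i).degree ≤ (d : ℕ)) ∧
      (∃ i, (f i).degree = (d : ℕ)) ∧
      ∀ i, ∑ j, (Polynomial.C (M0 c n i j) + Polynomial.X * Polynomial.C (M1mat n i j))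
        * f j = 0) ∧
    Matrix.det (fun i j : Fin n =>
      Polynomial.C (M0 c n i j) + Polynomial.X * Polynomial.C (M1mat n i j)) = 0 :=
  stmt16_general n c hc hS1 hS2 hBv d hld hmin
end

section
/- For n ≤ 4 and with c_1 = 1, the minor form of the conjecture holds: if m_n = 0 and (t(y) P_{n-2}) X^k y = 0 for all k ≥ 0 (notation as in criterion (SM)), and all c_i are nonzero, then y = 0, i.e. m_2 = ... = m_{n-1} = 0. -/
open Matrix

/-- The s×s anti-diagonal unit matrix `P`. -/
noncomputable def Pmat (s : ℕ) : Matrix (Fin s) (Fin s) ℂ :=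
  fun i j => if (i : ℕ) + (j : ℕ) = s - 1 then 1 else 0

/-- The vector `y = (-m 2, m 3, ..., (-1)^(n-2) m (n-1))`. -/
noncomputable def yvec (c : ℕ → ℂ) (n : ℕ) : Fin (n - 2) → ℂ :=
  fun k => (-1 : ℂ) ^ ((k : ℕ) + 1) * pm c ((k : ℕ) + 2)

/-- The (n-2)×(n-2) lower Hessenberg Toeplitz matrix `X` built from the minors. -/
noncomputable def Xmat (c : ℕ → ℂ) (n : ℕ) : Matrix (Fin (n - 2)) (Fin (n - 2)) ℂ :=
  fun i j => if (j : ℕ) ≤ (i : ℕ) + 1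
    then (-1 : ℂ) ^ ((i : ℕ) + 1 - (j : ℕ)) * pm c ((i : ℕ) + 1 - (j : ℕ)) else 0

/-- The minor form of the Töplitz pencil conjecture for `n ≤ 4`: if `m n = 0` and
`(ᵗy P) X^k y = 0` for all `k ≥ 0`, then `y = 0`, i.e. `m 2 = ... = m (n-1) = 0`. -/
theorem stmt19 (n : ℕ) (hn : n = 3 ∨ n = 4) (c : ℕ → ℂ) (hc1 : c 1 = 1)
    (hc : ∀ k, 2 ≤ k → k ≤ n + 1 → c k ≠ 0)
    (hmn : pm c n = 0)
    (hSM : ∀ k : ℕ, yvec c n ⬝ᵥ ((Pmat (n - 2) * Xmat c n ^ k) *ᵥ yvec c n) = 0) :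
    yvec c n = 0 := by
  rcases hn with rfl | rfl
  · have h0 := hSM 0
    simp [yvec, Pmat, Xmat, dotProduct, mulVec, Matrix.mul_apply,
      Fin.sum_univ_one, pow_succ] at h0
    funext i
    fin_cases i <;> simp [yvec, h0]
  · have hp0 : pm c 0 = 1 := by simp [pm]
    have h0 := hSM 0
    have h1 := hSM 1
    simp [yvec, Pmat, Xmat, dotProduct, mulVec, Matrix.mul_apply,
      Fin.sum_univ_two, hp0, pow_succ] at h0 h1
    have hab : pm c 2 * pm c 3 = 0 := by linear_combination (-1/2 : ℂ) * h0
    have hfin : pm c 2 = 0 ∧ pm c 3 = 0 := by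
      rcases mul_eq_zero.mp hab with ha | hb
      · have hb : pm c 3 = 0 := by
          have : pm c 3 * pm c 3 = 0 := by
            linear_combination h1 - (2 * pm c 1 * pm c 3 + pm c 2 * pm c 2) * ha
          exact mul_self_eq_zero.mp this
        exact ⟨ha, hb⟩
      · have ha : pm c 2 = 0 := by
          have h3 : pm c 2 * pm c 2 * pm c 2 = 0 := by
            linear_combination h1 - (pm c 3 + 2 * pm c 1 * pm c 2) * hb
          rcases mul_eq_zero.mp h3 with h | h
          · exact mul_self_eq_zero.mp h
          · exact h
        exact ⟨ha, hb⟩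
    funext i
    fin_cases i <;> simp [yvec, hfin.1, hfin.2]
end
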